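/- For every n ≥ 2 and every k with 0 ≤ k ≤ n−3, f_n(k, n−1) = ∑_{k'=k}^{n−2} f_{n−1}(k', n−2). -/

import Mathlib

/-- `e : Fin n → ℕ` is an inversion sequence: `e i ≤ i` (0-indexed). -/
def IsInvSeq {n : ℕ} (e : Fin n → ℕ) : Prop := ∀ i : Fin n, e i ≤ (i : ℕ)

/-- `e` avoids the pattern 0012: there are no indices `i < j < k < l`
with `e i = e j < e k < e l`. -/
def Avoids0012 {n : ℕ} (e : Fin n → ℕ) : Prop :=
  ¬ ∃ i j k l : Fin n, i < j ∧ j < k ∧ k < l ∧ e i = e j ∧ e j < e k ∧ e k < e l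

/-- The set `I_n(0012)` of inversion sequences of length `n` avoiding `0012`. -/
def InvSeq0012 (n : ℕ) : Set (Fin n → ℕ) := {e | IsInvSeq e ∧ Avoids0012 e}

/-- `R(e)`: the set of values appearing more than once in `e`. -/
def repeats {n : ℕ} (e : Fin n → ℕ) : Set ℕ :=
  {m | ∃ i j : Fin n, i ≠ j ∧ e i = m ∧ e j = m}

open Classical in
/-- `srpt e = min R(e)` if `R(e) ≠ ∅`, and `n - 1` otherwise. -/
noncomputable def srpt {n : ℕ} (e : Fin n → ℕ) : ℕ :=
  if (repeats e).Nonempty then sInf (repeats e) else n - 1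

/-- The last entry of `e` (and `0` for the empty sequence). -/
def lastEntry {n : ℕ} (e : Fin n → ℕ) : ℕ :=
  if h : 0 < n then e ⟨n - 1, by omega⟩ else 0

/-- `γ(e)`: the sequence `e` with its last entry removed. -/
def gammaSeq {n : ℕ} (e : Fin n → ℕ) : Fin (n - 1) → ℕ :=
  fun i => e (Fin.castLE (Nat.sub_le n 1) i)

/-- `f n k ℓ`: the number of `e ∈ I_n(0012)` with `srpt e = k` and `last e = ℓ`. -/
noncomputable def f (n k ℓ : ℕ) : ℕ :=
  Set.ncard {e : Fin n → ℕ | e ∈ InvSeq0012 n ∧ srpt e = k ∧ lastEntry e = ℓ}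

/-!
An inversion sequence of length `m + 1` ending in its largest admissible value `m` avoids `0012`
iff its first `m` entries avoid `001`, and both have the same repeated values. In a
`001`-avoiding inversion sequence `g` every entry satisfies `g (g i) = g i`, and an entry with
`g i < i` bounds every later entry; so the repeated values are exactly the values `g j < j`, and the
least of them, when there is one, is the last entry. Hence deleting the last entry maps the
`001`-avoiders of length `m + 1` with least repeated value `k` bijectively onto the
`001`-avoiders of length `m` whose repeated values are all `≥ k`; the inverse appends `k`,
which creates the repeat `k` because `g k = k`. Translating back through the first remark,
`f_{m+2}(k, m+1)` counts the `e ∈ I_{m+1}(0012)` with `last e = m` and `srpt e ≥ k`, which is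
the sum on the right.
-/

def Avoids001 {m : ℕ} (g : Fin m → ℕ) : Prop :=
  ¬ ∃ i j l : Fin m, i < j ∧ j < l ∧ g i = g j ∧ g j < g l

section Avoids001

variable {m : ℕ} {g : Fin m → ℕ}

theorem mem_repeats_iff_lt {v : ℕ} : v ∈ repeats g ↔ ∃ i j, i < j ∧ g i = v ∧ g j = v := by
  constructor
  · rintro ⟨i, j, hne, hi, hj⟩
    rcases hne.lt_or_gt with h | h
    exacts [⟨i, j, h, hi, hj⟩, ⟨j, i, h, hj, hi⟩]
  · rintro ⟨i, j, h, hi, hj⟩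
    exact ⟨i, j, h.ne, hi, hj⟩

theorem IsInvSeq.apply_lt (hg : IsInvSeq g) (i : Fin m) : g i < m := (hg i).trans_lt i.isLt

theorem IsInvSeq.exists_lt_of_mem_repeats (hg : IsInvSeq g) {v : ℕ} (hv : v ∈ repeats g) :
    ∃ j, g j = v ∧ v < j := by
  obtain ⟨i, j, hij, rfl, hj⟩ := mem_repeats_iff_lt.1 hv
  exact ⟨j, hj, (hg i).trans_lt hij⟩

theorem Avoids001.le_of_eq (ha : Avoids001 g) {i j l : Fin m} (hij : i < j) (hjl : j < l)
    (h : g i = g j) : g l ≤ g j :=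
  not_lt.1 fun hlt => ha ⟨i, j, l, hij, hjl, h, hlt⟩

theorem Avoids001.apply_apply_eq (hg : IsInvSeq g) (ha : Avoids001 g) (i : Fin m) :
    g ⟨g i, hg.apply_lt i⟩ = g i := by
  obtain ⟨i, hi⟩ := i
  induction i using Nat.strong_induction_on with
  | _ i ih =>
    set j : Fin m := ⟨g ⟨i, hi⟩, hg.apply_lt _⟩
    rcases (hg ⟨i, hi⟩).eq_or_lt with h | h
    · simp only [j, h]
    by_contra hne
    have hgj : g j < j := lt_of_le_of_ne (hg j) hne
    have := ha.le_of_eq (i := ⟨g j, hg.apply_lt j⟩) (l := ⟨i, hi⟩) hgj h (ih _ h j.isLt)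
    exact this.not_gt hgj

theorem Avoids001.apply_le_of_lt (hg : IsInvSeq g) (ha : Avoids001 g) {i j : Fin m}
    (hij : i < j) (hi : g i < i) : g j ≤ g i :=
  ha.le_of_eq (i := ⟨g i, hg.apply_lt i⟩) hi hij (ha.apply_apply_eq hg i)

theorem Avoids001.apply_mem_repeats (hg : IsInvSeq g) (ha : Avoids001 g) {j : Fin m}
    (hj : g j < j) : g j ∈ repeats g :=
  ⟨⟨g j, hg.apply_lt j⟩, j, Fin.ne_of_lt hj, ha.apply_apply_eq hg j, rfl⟩

theorem Avoids001.apply_eq_of_mem_lowerBounds (hg : IsInvSeq g) (ha : Avoids001 g) {k : ℕ}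
    (hk : k ∈ lowerBounds (repeats g)) (hkm : k < m) : g ⟨k, hkm⟩ = k := by
  by_contra hne
  have hlt : g ⟨k, hkm⟩ < k := lt_of_le_of_ne (hg _) hne
  exact hlt.not_ge (hk (ha.apply_mem_repeats hg hlt))

theorem Avoids001.apply_last_eq_of_isLeast {g : Fin (m + 1) → ℕ} (hg : IsInvSeq g)
    (ha : Avoids001 g) {k : ℕ} (hk : IsLeast (repeats g) k) : g (Fin.last m) = k := by
  obtain ⟨j, rfl, hj⟩ := hg.exists_lt_of_mem_repeats hk.1
  have hle : g (Fin.last m) ≤ g j := by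
    rcases (Fin.le_last j).eq_or_lt with h | h
    · rw [h]
    · exact ha.apply_le_of_lt hg h hj
  have hlt : g (Fin.last m) < Fin.last m := hle.trans_lt (hj.trans_le (Fin.le_last j))
  exact hle.antisymm (hk.2 (ha.apply_mem_repeats hg hlt))

end Avoids001

section Snoc

variable {m : ℕ} {g : Fin m → ℕ} {x : ℕ}

theorem lastEntry_snoc : lastEntry (Fin.snoc g x : Fin (m + 1) → ℕ) = x := by
  simp [lastEntry, Fin.snoc]

theorem isInvSeq_snoc_iff : IsInvSeq (Fin.snoc g x : Fin (m + 1) → ℕ) ↔ IsInvSeq g ∧ x ≤ m := by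
  simp [IsInvSeq, Fin.forall_fin_succ']

theorem repeats_snoc :
    repeats (Fin.snoc g x : Fin (m + 1) → ℕ) = repeats g ∪ ({x} ∩ Set.range g) := by
  ext v
  have hl : ∀ i : Fin m, Fin.last m ≠ i.castSucc := fun i => (Fin.castSucc_ne_last i).symm
  simp only [repeats, ne_eq, Fin.exists_fin_succ', Fin.snoc_castSucc, Fin.snoc_last,
    Fin.castSucc_inj, Fin.castSucc_ne_last, not_false_eq_true, true_and, hl, exists_and_left,
    not_true_eq_false, and_self, false_and, or_false, Set.mem_ofPred_eq, Set.mem_union,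
    Set.mem_inter_iff, Set.mem_singleton_iff, Set.mem_range]
  aesop

theorem avoids001_snoc_iff :
    Avoids001 (Fin.snoc g x : Fin (m + 1) → ℕ) ↔ Avoids001 g ∧ x ∈ lowerBounds (repeats g) := by
  have hl : ∀ i : Fin m, ¬ Fin.last m < i.castSucc := fun i => not_lt.2 (Fin.le_last _)
  simp only [Avoids001, Fin.exists_fin_succ', lowerBounds, mem_repeats_iff_lt]
  simp only [Fin.castSucc_lt_castSucc_iff, Fin.snoc_castSucc, exists_and_left,
    Fin.castSucc_lt_last, Fin.snoc_last, true_and, hl, false_and, and_false, exists_false,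
    lt_self_iff_false, and_self, or_self, or_false, not_exists, not_or, not_and, not_lt, forall_and,
    forall_exists_index, and_imp, Set.mem_ofPred_eq, and_congr_right_iff]
  exact fun _ => ⟨fun h v i j hij hi hj => hj ▸ h i j hij (hi.trans hj.symm),
    fun h i j hij he => h i j hij he rfl⟩

theorem snoc_top_mem_invSeq0012_iff :
    (Fin.snoc g m : Fin (m + 1) → ℕ) ∈ InvSeq0012 (m + 1) ↔ IsInvSeq g ∧ Avoids001 g := by
  have hl : ∀ i : Fin m, ¬ Fin.last m < i.castSucc := fun i => not_lt.2 (Fin.le_last _)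
  simp only [InvSeq0012, Set.mem_ofPred_eq, isInvSeq_snoc_iff, le_refl, and_true,
    and_congr_right_iff]
  intro hg
  have hm : ∀ i, ¬ m ≤ g i := fun i => not_le.2 ((hg i).trans_lt i.isLt)
  simp only [Avoids0012, exists_and_left, Fin.exists_fin_succ', Fin.snoc_castSucc, Fin.snoc_last,
    Fin.castSucc_lt_castSucc_iff, Fin.castSucc_lt_last, true_and, hl, false_and, exists_false,
    lt_self_iff_false, and_false, and_self, or_self, or_false, not_exists, not_and, not_or, not_lt,
    hm, imp_false, Avoids001]
  exact ⟨fun h i j hij l hjl => (h i j hij l hjl).2,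
    fun h i j hij l hjl => ⟨fun p hlp he hlt => absurd (h i j hij l hjl he) hlt.not_ge,
      h i j hij l hjl⟩⟩

theorem repeats_snoc_top (hg : IsInvSeq g) :
    repeats (Fin.snoc g m : Fin (m + 1) → ℕ) = repeats g := by
  have hm : m ∉ Set.range g := fun ⟨i, hi⟩ => (hi ▸ hg.apply_lt i).false
  rw [repeats_snoc, Set.singleton_inter_eq_empty.2 hm, Set.union_empty]

end Snoc

theorem srpt_eq_iff_isLeast {n k : ℕ} (e : Fin n → ℕ) (hk : k < n - 1) :
    srpt e = k ↔ IsLeast (repeats e) k := by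
  unfold srpt
  split_ifs with h
  · exact ⟨fun hs => hs ▸ ⟨Nat.sInf_mem h, fun v hv => Nat.sInf_le hv⟩, IsLeast.csInf_eq⟩
  · exact ⟨fun hs => by omega, fun hl => absurd ⟨k, hl.1⟩ h⟩

theorem le_srpt_iff {n k : ℕ} (e : Fin n → ℕ) (hk : k ≤ n - 1) :
    k ≤ srpt e ↔ k ∈ lowerBounds (repeats e) := by
  unfold srpt
  split_ifs with h
  · exact le_csInf_iff'' h
  · simp [Set.not_nonempty_iff_eq_empty.1 h, hk]

theorem srpt_le {n : ℕ} {e : Fin n → ℕ} (he : IsInvSeq e) : srpt e ≤ n - 1 := by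
  unfold srpt
  split_ifs with h
  · obtain ⟨v, hv⟩ := h
    obtain ⟨j, rfl, hj⟩ := he.exists_lt_of_mem_repeats hv
    have := j.isLt
    exact (Nat.sInf_le hv).trans (by omega)
  · rfl

theorem finite_setOf_isInvSeq (m : ℕ) : {e : Fin m → ℕ | IsInvSeq e}.Finite :=
  (Set.Finite.pi fun i : Fin m => Set.finite_Iic (i : ℕ)).subset fun _ he i _ => he i

theorem ncard_eq_of_snoc_mem_iff {α : Type*} {m : ℕ} {x : α} {S : Set (Fin (m + 1) → α)}
    {T : Set (Fin m → α)} (h : ∀ g y, Fin.snoc g y ∈ S ↔ y = x ∧ g ∈ T) :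
    S.ncard = T.ncard := by
  have hS : S = (Fin.snoc · x) '' T := by
    ext e
    induction e using Fin.snocCases with
    | _ g y => simp [h, and_comm, eq_comm]
  rw [hS]
  exact Set.ncard_image_of_injective T (Fin.snoc_left_injective (α := fun _ => α) x)

theorem ncard_eq_sum_ncard_fiberwise {α β : Type*} [DecidableEq β] {s : Set α} (hs : s.Finite)
    {t : Finset β} {f : α → β} (hf : ∀ x ∈ s, f x ∈ t) :
    s.ncard = ∑ b ∈ t, {x ∈ s | f x = b}.ncard := by
  rw [Set.ncard_eq_toFinset_card s hs,
    Finset.card_eq_sum_card_fiberwise fun x hx => by simpa using hf x (by simpa using hx)]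
  refine Finset.sum_congr rfl fun b _ => ?_
  rw [← Set.ncard_coe_finset]
  congr
  ext
  simp

theorem ncard_lastEntry_eq_top (m : ℕ) (P : Set ℕ → Prop) :
    {e : Fin (m + 1) → ℕ | e ∈ InvSeq0012 (m + 1) ∧ P (repeats e) ∧ lastEntry e = m}.ncard =
      {g : Fin m → ℕ | IsInvSeq g ∧ Avoids001 g ∧ P (repeats g)}.ncard := by
  refine ncard_eq_of_snoc_mem_iff (x := m) fun g y => ?_
  simp only [Set.mem_ofPred_eq, lastEntry_snoc]
  constructor
  · rintro ⟨he, hP, rfl⟩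
    obtain ⟨hg, ha⟩ := snoc_top_mem_invSeq0012_iff.1 he
    rw [repeats_snoc_top hg] at hP
    exact ⟨rfl, hg, ha, hP⟩
  · rintro ⟨rfl, hg, ha, hP⟩
    exact ⟨snoc_top_mem_invSeq0012_iff.2 ⟨hg, ha⟩, by rwa [repeats_snoc_top hg], rfl⟩

theorem ncard_isLeast_repeats_eq {m k : ℕ} (hk : k < m) :
    {g : Fin (m + 1) → ℕ | IsInvSeq g ∧ Avoids001 g ∧ IsLeast (repeats g) k}.ncard =
      {h : Fin m → ℕ | IsInvSeq h ∧ Avoids001 h ∧ k ∈ lowerBounds (repeats h)}.ncard := by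
  refine ncard_eq_of_snoc_mem_iff (x := k) fun h y => ?_
  simp only [Set.mem_ofPred_eq]
  constructor
  · rintro ⟨hg, ha, hl⟩
    have hy : y = k := by simpa using ha.apply_last_eq_of_isLeast hg hl
    refine ⟨hy, (isInvSeq_snoc_iff.1 hg).1, (avoids001_snoc_iff.1 ha).1, ?_⟩
    exact lowerBounds_mono_set (repeats_snoc ▸ Set.subset_union_left) hl.2
  · rintro ⟨rfl, hh, ha, hl⟩
    have hy : y ∈ Set.range h := ⟨⟨y, hk⟩, ha.apply_eq_of_mem_lowerBounds hh hl hk⟩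
    refine ⟨isInvSeq_snoc_iff.2 ⟨hh, hk.le⟩, avoids001_snoc_iff.2 ⟨ha, hl⟩, ?_, ?_⟩
    · rw [repeats_snoc]; exact Or.inr ⟨rfl, hy⟩
    · rw [repeats_snoc, lowerBounds_union]
      exact ⟨hl, fun v hv => hv.1.ge⟩

theorem f_eq_ncard_isLeast {m k : ℕ} (ℓ : ℕ) (hk : k < m) :
    f (m + 1) k ℓ =
      {e : Fin (m + 1) → ℕ | e ∈ InvSeq0012 (m + 1) ∧ IsLeast (repeats e) k ∧
        lastEntry e = ℓ}.ncard := by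
  rw [f]
  congr! 4 with e
  exact and_congr_left' (srpt_eq_iff_isLeast e hk)

theorem sum_f_Icc_eq_ncard_lowerBounds {m k : ℕ} (ℓ : ℕ) (hk : k ≤ m) :
    ∑ k' ∈ Finset.Icc k m, f (m + 1) k' ℓ =
      {e : Fin (m + 1) → ℕ | e ∈ InvSeq0012 (m + 1) ∧ k ∈ lowerBounds (repeats e) ∧
        lastEntry e = ℓ}.ncard := by
  rw [ncard_eq_sum_ncard_fiberwise (f := srpt) (t := Finset.Icc k m)]
  · refine Finset.sum_congr rfl fun k' hk' => ?_
    rw [f]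
    congr 1
    ext e
    simp only [Set.mem_ofPred_eq, ← le_srpt_iff e hk]
    constructor
    · rintro ⟨he, rfl, hl⟩
      exact ⟨⟨he, (Finset.mem_Icc.1 hk').1, hl⟩, rfl⟩
    · rintro ⟨⟨he, -, hl⟩, rfl⟩
      exact ⟨he, rfl, hl⟩
  · exact (finite_setOf_isInvSeq _).subset fun e he => he.1.1
  · exact fun e he => Finset.mem_Icc.2 ⟨(le_srpt_iff e hk).2 he.2.1, srpt_le he.1.1⟩

theorem stmt9_general (n k : ℕ) (hk : k + 3 ≤ n) :
    f n k (n - 1) = ∑ k' ∈ Finset.Icc k (n - 2), f (n - 1) k' (n - 2) := by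
  obtain ⟨m, rfl⟩ : ∃ m, n = m + 2 := ⟨n - 2, by omega⟩
  show f (m + 2) k (m + 1) = ∑ k' ∈ Finset.Icc k m, f (m + 1) k' m
  rw [f_eq_ncard_isLeast _ (by omega), ncard_lastEntry_eq_top (m + 1) (IsLeast · k),
    ncard_isLeast_repeats_eq (by omega), sum_f_Icc_eq_ncard_lowerBounds _ (by omega),
    ncard_lastEntry_eq_top m (k ∈ lowerBounds ·)]

/-- For `n ≥ 2` and `0 ≤ k ≤ n - 3`,
`f n k (n-1) = ∑_{k'=k}^{n-2} f (n-1) k' (n-2)`. -/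
theorem stmt9 (n k : ℕ) (hn : 2 ≤ n) (hk : k + 3 ≤ n) :
    f n k (n - 1) = ∑ k' ∈ Finset.Icc k (n - 2), f (n - 1) k' (n - 2) :=
  stmt9_general n k hk
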